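/- Let F ∈ ℂ[x,y,s,t] be an irreducible polynomial of total degree δ such that none of F_x, F_y, F_s, F_t is identically zero. Then: (a) for every popular curve γ there exists an irreducible algebraic curve γ* ⊂ ℂ² of degree at most δ such that γ ⊆ γ_{s,t} for all (s,t) ∈ γ*; and (b) for every popular dual curve γ* there exists an irreducible algebraic curve γ ⊂ ℂ² of degree at most δ such that γ* ⊆ γ*_{x,y} for all (x,y) ∈ γ. -/

import Mathlib

open MvPolynomial

noncomputable section

def ev4 (F : MvPolynomial (Fin 4) ℂ) (x y s t : ℂ) : ℂ := eval ![x, y, s, t] F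

def ev2 (g : MvPolynomial (Fin 2) ℂ) (p : ℂ × ℂ) : ℂ := eval ![p.1, p.2] g

/-- The curve `γ_{c,d} = {(x,y) ∈ ℂ² : F(x,y,c,d) = 0}`. -/
def curveOf (F : MvPolynomial (Fin 4) ℂ) (c d : ℂ) : Set (ℂ × ℂ) :=
  {p : ℂ × ℂ | ev4 F p.1 p.2 c d = 0}

/-- The dual curve `γ*_{a,b} = {(s,t) ∈ ℂ² : F(a,b,s,t) = 0}`. -/
def dualCurveOf (F : MvPolynomial (Fin 4) ℂ) (a b : ℂ) : Set (ℂ × ℂ) :=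
  {q : ℂ × ℂ | ev4 F a b q.1 q.2 = 0}

/-- `𝒯 = {(c,d) : F(x,y,c,d) ≡ 0 as a polynomial in x,y}`. -/
def TT (F : MvPolynomial (Fin 4) ℂ) : Set (ℂ × ℂ) :=
  {q : ℂ × ℂ | ∀ x y : ℂ, ev4 F x y q.1 q.2 = 0}

/-- `𝒮 = {(a,b) : F(a,b,s,t) ≡ 0 as a polynomial in s,t}`. -/
def SS (F : MvPolynomial (Fin 4) ℂ) : Set (ℂ × ℂ) :=
  {p : ℂ × ℂ | ∀ s t : ℂ, ev4 F p.1 p.2 s t = 0}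

/-- An irreducible algebraic curve in `ℂ²`: the zero set of an irreducible polynomial. -/
def IsIrredCurve (γ : Set (ℂ × ℂ)) : Prop :=
  ∃ g : MvPolynomial (Fin 2) ℂ, Irreducible g ∧ γ = {p : ℂ × ℂ | ev2 g p = 0}

/-- An irreducible algebraic curve in `ℂ²` of degree at most `δ`. -/
def IsIrredCurveDegLE (γ : Set (ℂ × ℂ)) (δ : ℕ) : Prop :=
  ∃ g : MvPolynomial (Fin 2) ℂ, Irreducible g ∧ g.totalDegree ≤ δ ∧
    γ = {p : ℂ × ℂ | ev2 g p = 0}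

/-- A popular curve: an irreducible algebraic curve contained in `γ_{s,t}` for at least
`δ²+1` distinct points `(s,t) ∈ ℂ²\𝒯`. -/
def IsPopular (F : MvPolynomial (Fin 4) ℂ) (δ : ℕ) (γ : Set (ℂ × ℂ)) : Prop :=
  IsIrredCurve γ ∧ ∃ P : Finset (ℂ × ℂ), δ ^ 2 + 1 ≤ P.card ∧
    ∀ q ∈ P, q ∉ TT F ∧ γ ⊆ curveOf F q.1 q.2

/-- A popular dual curve: an irreducible algebraic curve contained in `γ*_{x,y}` for at
least `δ²+1` distinct points `(x,y) ∈ ℂ²\𝒮`. -/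
def IsPopularDual (F : MvPolynomial (Fin 4) ℂ) (δ : ℕ) (γ : Set (ℂ × ℂ)) : Prop :=
  IsIrredCurve γ ∧ ∃ P : Finset (ℂ × ℂ), δ ^ 2 + 1 ≤ P.card ∧
    ∀ p ∈ P, p ∉ SS F ∧ γ ⊆ dualCurveOf F p.1 p.2

theorem deg_eq_sum {σ : Type*} (w : σ →₀ ℕ) : w.degree = w.sum fun _ e => e := rfl


theorem tdeg_mul_eq {σ R : Type*} [CommRing R] [IsDomain R] [DecidableEq σ]
    {a b : MvPolynomial σ R} (ha : a ≠ 0) (hb : b ≠ 0) :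
    (a * b).totalDegree = a.totalDegree + b.totalDegree := by
  refine le_antisymm (totalDegree_mul a b) ?_
  set m := a.totalDegree with hm
  set n := b.totalDegree with hn
  set A := homogeneousComponent m a with hA
  set B := homogeneousComponent n b with hB
  have hAne : A ≠ 0 := by
    obtain ⟨d, hd, hds⟩ := Finset.exists_mem_eq_sup a.support
      (support_nonempty.mpr ha) (fun d => d.sum fun _ e => e)
    intro h
    have : coeff d A = coeff d a := by
      rw [hA, coeff_homogeneousComponent, if_pos (by rw [deg_eq_sum, hm, totalDegree, hds])]
    rw [h, coeff_zero] at this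
    exact (mem_support_iff.mp hd) this.symm
  have hBne : B ≠ 0 := by
    obtain ⟨d, hd, hds⟩ := Finset.exists_mem_eq_sup b.support
      (support_nonempty.mpr hb) (fun d => d.sum fun _ e => e)
    intro h
    have : coeff d B = coeff d b := by
      rw [hB, coeff_homogeneousComponent, if_pos (by rw [deg_eq_sum, hn, totalDegree, hds])]
    rw [h, coeff_zero] at this
    exact (mem_support_iff.mp hd) this.symm
  have hABhom : (A * B).IsHomogeneous (m + n) :=
    (homogeneousComponent_isHomogeneous m a).mul (homogeneousComponent_isHomogeneous n b)
  have hABne : A * B ≠ 0 := mul_ne_zero hAne hBne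
  obtain ⟨d, hd⟩ := support_nonempty.mpr hABne
  have hds : (d.sum fun _ e => e) = m + n := by
    have := hABhom (mem_support_iff.mp hd)
    simpa [Finsupp.weight, Finsupp.sum, Finsupp.linearCombination] using this
  have key : coeff d (a * b) = coeff d (A * B) := by
    rw [coeff_mul, coeff_mul]
    refine Finset.sum_congr rfl ?_
    rintro ⟨e, f⟩ hef
    have hef' : e + f = d := Finset.HasAntidiagonal.mem_antidiagonal.mp hef
    have hsum : (e.sum fun _ x => x) + (f.sum fun _ x => x) = m + n := by
      rw [← hds, ← hef']
      exact (Finsupp.sum_add_index' (fun _ => rfl) (fun _ _ _ => rfl)).symm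
    by_cases he : (e.sum fun _ x => x) = m
    · have hf : (f.sum fun _ x => x) = n := by omega
      simp only [hA, hB, coeff_homogeneousComponent, deg_eq_sum, if_pos he, if_pos hf]
      exact congrArg₂ (· * ·) (if_pos he).symm (if_pos hf).symm
    · by_cases he2 : (e.sum fun _ x => x) ≤ m
      · have hf : n < f.sum fun _ x => x := by omega
        have hcf : coeff f b = 0 := coeff_eq_zero_of_totalDegree_lt (hn ▸ hf)
        simp only [hA, hB, coeff_homogeneousComponent, deg_eq_sum, hcf, mul_zero,
          if_neg (by omega : ¬(f.sum fun _ x => x) = n)]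
      · have he3 : m < e.sum fun _ x => x := by omega
        have hce : coeff e a = 0 := coeff_eq_zero_of_totalDegree_lt (hm ▸ he3)
        simp only [hA, hB, coeff_homogeneousComponent, deg_eq_sum, hce, zero_mul, if_neg he]
  have hd' : d ∈ (a * b).support := by
    rw [mem_support_iff, key]
    exact mem_support_iff.mp hd
  calc m + n = d.sum fun _ e => e := hds.symm
    _ ≤ (a * b).totalDegree := le_totalDegree hd'

/-- Triangle finset: pairs with sum ≤ k -/
def Tri (k : ℕ) : Finset (ℕ × ℕ) :=
  (Finset.range (k+1)).biUnion (fun j => Finset.HasAntidiagonal.antidiagonal j)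

theorem mem_Tri {k : ℕ} {p : ℕ × ℕ} : p ∈ Tri k ↔ p.1 + p.2 ≤ k := by
  simp only [Tri, Finset.mem_biUnion, Finset.mem_range, Finset.HasAntidiagonal.mem_antidiagonal]
  constructor
  · rintro ⟨j, hj, rfl⟩; omega
  · intro h; exact ⟨p.1 + p.2, by omega, rfl⟩

theorem card_Tri_mul_two (k : ℕ) : (Tri k).card * 2 = (k+1) * (k+2) := by
  have hdisj : ∀ x ∈ Finset.range (k+1), ∀ y ∈ Finset.range (k+1), x ≠ y →
      Disjoint (Finset.HasAntidiagonal.antidiagonal x) (Finset.HasAntidiagonal.antidiagonal y) := by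
    intro x _ y _ hxy
    refine Finset.disjoint_left.mpr ?_
    intro p hp hp'
    rw [Finset.HasAntidiagonal.mem_antidiagonal] at hp hp'
    omega
  have := Finset.card_biUnion hdisj
  rw [Tri, this]
  simp only [Finset.Nat.card_antidiagonal]
  have h1 : (∑ j ∈ Finset.range (k+1), (j+1)) = ∑ j ∈ Finset.range (k+2), j := by
    simpa using (Finset.sum_range_succ' (fun i => i) (k+1)).symm
  have h2 := Finset.sum_range_id_mul_two (k+2)
  have h3 : k + 2 - 1 = k + 1 := rfl
  rw [h3] at h2
  rw [h1, h2]
  ring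

theorem fin2_sum (w : Fin 2 →₀ ℕ) : (w.sum fun _ e => e) = w 0 + w 1 := by
  rw [Finsupp.sum_fintype _ _ (fun _ => rfl), Fin.sum_univ_two]

/-- equiv between exponent sets -/
def triEquiv (k : ℕ) : {n : Fin 2 →₀ ℕ | (n.sum fun _ e => e) ≤ k} ≃ {p : ℕ × ℕ // p ∈ Tri k} where
  toFun n := ⟨((n : Fin 2 →₀ ℕ) 0, (n : Fin 2 →₀ ℕ) 1), by
    rw [mem_Tri]
    have := n.2
    simp only [Set.mem_setOf_eq, fin2_sum] at this
    exact this⟩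
  invFun p := ⟨Finsupp.equivFunOnFinite.symm ![p.1.1, p.1.2], by
    have := mem_Tri.mp p.2
    simp only [Set.mem_setOf_eq, fin2_sum]
    simpa using this⟩
  left_inv n := by
    ext i
    simp only [Finsupp.coe_equivFunOnFinite_symm]
    fin_cases i <;> simp
  right_inv p := by
    ext <;> simp

instance triFintype (k : ℕ) : Fintype {n : Fin 2 →₀ ℕ | (n.sum fun _ e => e) ≤ k} :=
  Fintype.ofEquiv _ (triEquiv k).symm

theorem finrank_Vk_mul_two (k : ℕ) :
    Module.finrank ℂ (restrictTotalDegree (Fin 2) ℂ k) * 2 = (k+1) * (k+2) := by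
  have b := MvPolynomial.basisRestrictSupport ℂ {n : Fin 2 →₀ ℕ | (n.sum fun _ e => e) ≤ k}
  have h1 : Module.finrank ℂ (restrictTotalDegree (Fin 2) ℂ k)
      = Fintype.card {n : Fin 2 →₀ ℕ | (n.sum fun _ e => e) ≤ k} :=
    Module.finrank_eq_card_basis b
  rw [h1, Fintype.card_congr (triEquiv k), Fintype.card_coe, card_Tri_mul_two]

/-- separating polynomial: 1 at u, 0 at v -/
def sep (u v : ℂ × ℂ) : MvPolynomial (Fin 2) ℂ :=
  if u.1 ≠ v.1 then C ((u.1 - v.1)⁻¹) * (X 0 - C v.1) else C ((u.2 - v.2)⁻¹) * (X 1 - C v.2)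

theorem sep_tdeg (u v : ℂ × ℂ) : (sep u v).totalDegree ≤ 1 := by
  have hX : ∀ (i : Fin 2) (c : ℂ), (X i - C c : MvPolynomial (Fin 2) ℂ).totalDegree ≤ 1 := by
    intro i c
    have : (X i - C c : MvPolynomial (Fin 2) ℂ) = X i + C (-c) := by
      rw [sub_eq_add_neg, map_neg]
    rw [this]
    refine le_trans (totalDegree_add _ _) ?_
    simp [totalDegree_X]
  unfold sep
  split_ifs
  all_goals
    refine le_trans (totalDegree_mul _ _) ?_
    simpa [totalDegree_C] using hX _ _

theorem sep_eval_self {u v : ℂ × ℂ} (h : u ≠ v) : ev2 (sep u v) u = 1 := by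
  unfold sep ev2
  split_ifs with h1
  · simp only [map_mul, eval_C, map_sub, eval_X]
    show (u.1 - v.1)⁻¹ * (![u.1, u.2] 0 - v.1) = 1
    simp only [Matrix.cons_val_zero]
    exact inv_mul_cancel₀ (sub_ne_zero.mpr h1)
  · push_neg at h1
    have h2 : u.2 ≠ v.2 := fun h2 => h (Prod.ext h1 h2)
    simp only [map_mul, eval_C, map_sub, eval_X]
    show (u.2 - v.2)⁻¹ * (![u.1, u.2] 1 - v.2) = 1
    simp only [Matrix.cons_val_one, Matrix.head_cons]
    exact inv_mul_cancel₀ (sub_ne_zero.mpr h2)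

theorem sep_eval_other (u v : ℂ × ℂ) : ev2 (sep u v) v = 0 := by
  unfold sep ev2
  split_ifs with h1
  · simp
  · simp

theorem interp_surjective (P : Finset (ℂ × ℂ)) (k : ℕ) (hk : P.card ≤ k + 1) :
    Function.Surjective (fun (f : restrictTotalDegree (Fin 2) ℂ k) =>
      (fun z : ↥P => ev2 f.1 z.1)) := by
  -- range of the linear version contains Pi.single
  have key : ∀ i : ↥P, ∃ f : restrictTotalDegree (Fin 2) ℂ k,
      (fun z : ↥P => ev2 f.1 z.1) = Pi.single i 1 := by
    intro i
    set g : MvPolynomial (Fin 2) ℂ := ∏ v ∈ P.erase i.1, sep i.1 v with hg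
    have hdeg : g.totalDegree ≤ k := by
      refine le_trans (totalDegree_finset_prod _ _) ?_
      refine le_trans (Finset.sum_le_sum fun v _ => sep_tdeg i.1 v) ?_
      rw [Finset.sum_const, smul_eq_mul, mul_one]
      have := Finset.card_erase_of_mem i.2
      omega
    refine ⟨⟨g, (mem_restrictTotalDegree _ _ _).mpr hdeg⟩, ?_⟩
    funext z
    by_cases hz : z = i
    · subst hz
      rw [Pi.single_eq_same]
      show eval ![z.1.1, z.1.2] g = 1
      rw [hg]
      rw [map_prod]
      refine Finset.prod_eq_one fun v hv => ?_
      have hne : z.1 ≠ v := fun h => (Finset.mem_erase.mp hv).1 h.symm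
      exact sep_eval_self hne
    · rw [Pi.single_eq_of_ne hz]
      show eval ![z.1.1, z.1.2] g = 0
      rw [hg, map_prod]
      refine Finset.prod_eq_zero (Finset.mem_erase.mpr ⟨fun h => hz (Subtype.ext h), z.2⟩) ?_
      exact sep_eval_other i.1 z.1
  intro v
  -- decompose v as sum of singles
  choose f hf using key
  refine ⟨∑ i : ↥P, v i • f i, ?_⟩
  funext j
  have : ((∑ i : ↥P, v i • f i : restrictTotalDegree (Fin 2) ℂ k) : MvPolynomial (Fin 2) ℂ)
      = ∑ i : ↥P, v i • (f i : MvPolynomial (Fin 2) ℂ) := by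
    push_cast
    rfl
  show ev2 _ j.1 = v j
  rw [this]
  unfold ev2
  rw [map_sum]
  have : ∀ i : ↥P, eval ![j.1.1, j.1.2] (v i • (f i : MvPolynomial (Fin 2) ℂ))
      = v i * ((Pi.single i (1:ℂ) : ↥P → ℂ) j) := by
    intro i
    rw [smul_eval]
    congr 1
    have := congrFun (hf i) j
    exact this
  rw [Finset.sum_congr rfl fun i _ => this i]
  simp [Pi.single_apply]

/-- evaluation as a linear map -/
def evalLM (v : Fin 2 → ℂ) : MvPolynomial (Fin 2) ℂ →ₗ[ℂ] ℂ where
  toFun f := eval v f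
  map_add' := by simp
  map_smul' := by simp [smul_eval]

set_option maxHeartbeats 2000000 in
theorem bezout_card {p q : MvPolynomial (Fin 2) ℂ} (hp : p ≠ 0) (hq : Prime q)
    (hndvd : ¬ q ∣ p) (P : Finset (ℂ × ℂ))
    (hcz : ∀ z ∈ P, ev2 p z = 0 ∧ ev2 q z = 0) :
    P.card ≤ p.totalDegree * q.totalDegree := by
  set m := p.totalDegree with hm
  set n := q.totalDegree with hn
  set r := P.card with hr
  set k := m + n + r with hk
  set V : ℕ → Submodule ℂ (MvPolynomial (Fin 2) ℂ) := restrictTotalDegree (Fin 2) ℂ with hV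
  have memV : ∀ (j : ℕ) (f : MvPolynomial (Fin 2) ℂ), f.totalDegree ≤ j → f ∈ V j :=
    fun j f h => (mem_restrictTotalDegree _ _ _).mpr h
  have degV : ∀ (j : ℕ) (f : V j), (f : MvPolynomial (Fin 2) ℂ).totalDegree ≤ j :=
    fun j f => (mem_restrictTotalDegree _ _ _).mp f.2
  have hΦmem : ∀ ab : (V (n+r)) × (V (m+r)), p * ab.1.1 + q * ab.2.1 ∈ V k := by
    rintro ab
    refine memV _ _ (le_trans (totalDegree_add _ _) (max_le ?_ ?_))
    · refine le_trans (totalDegree_mul _ _) ?_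
      have := degV _ ab.1
      omega
    · refine le_trans (totalDegree_mul _ _) ?_
      have := degV _ ab.2
      omega
  set Φ : (V (n+r)) × (V (m+r)) →ₗ[ℂ] V k :=
    LinearMap.codRestrict (V k)
      (((LinearMap.mulLeft ℂ p).comp ((V (n+r)).subtype.comp (LinearMap.fst ℂ _ _))) +
       ((LinearMap.mulLeft ℂ q).comp ((V (m+r)).subtype.comp (LinearMap.snd ℂ _ _))))
      (fun ab => hΦmem ab) with hΦ
  have hΦval : ∀ ab : (V (n+r)) × (V (m+r)), (Φ ab : MvPolynomial (Fin 2) ℂ)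
      = p * ab.1.1 + q * ab.2.1 := fun ab => rfl
  have hΨ1mem : ∀ c : V r, q * c.1 ∈ V (n + r) := by
    intro c
    refine memV _ _ (le_trans (totalDegree_mul _ _) ?_)
    have := degV _ c
    omega
  have hΨ2mem : ∀ c : V r, (-p) * c.1 ∈ V (m + r) := by
    intro c
    refine memV _ _ (le_trans (totalDegree_mul _ _) ?_)
    have h1 := degV _ c
    have h2 : (-p).totalDegree = m := by rw [hm, totalDegree_neg]
    omega
  set Ψ : (V r) →ₗ[ℂ] (V (n+r)) × (V (m+r)) :=
    LinearMap.prod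
      (LinearMap.codRestrict (V (n+r)) ((LinearMap.mulLeft ℂ q).comp (V r).subtype) hΨ1mem)
      (LinearMap.codRestrict (V (m+r)) ((LinearMap.mulLeft ℂ (-p)).comp (V r).subtype) hΨ2mem)
    with hΨdef
  have hΨval : ∀ c : V r, ((Ψ c).1.1 : MvPolynomial (Fin 2) ℂ) = q * c.1
      ∧ ((Ψ c).2.1 : MvPolynomial (Fin 2) ℂ) = (-p) * c.1 := fun c => ⟨rfl, rfl⟩
  have hΨinj : Function.Injective Ψ := by
    intro c d h
    have h1 : q * c.1 = q * d.1 := by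
      have := congrArg (fun x : (V (n+r)) × (V (m+r)) => (x.1 : MvPolynomial (Fin 2) ℂ)) h
      simpa [(hΨval c).1, (hΨval d).1] using this
    exact Subtype.ext (mul_left_cancel₀ hq.ne_zero h1)
  set E : V k →ₗ[ℂ] (↥P → ℂ) :=
    (LinearMap.pi fun z : ↥P => evalLM ![z.1.1, z.1.2]).comp (V k).subtype with hE
  have hEsurj : Function.Surjective E := interp_surjective P k (by omega)
  have hrange_le : LinearMap.range Φ ≤ LinearMap.ker E := by
    rintro x ⟨ab, rfl⟩
    rw [LinearMap.mem_ker]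
    funext z
    show eval ![z.1.1, z.1.2] (Φ ab : MvPolynomial (Fin 2) ℂ) = 0
    rw [hΦval]
    obtain ⟨h1, h2⟩ := hcz z.1 z.2
    unfold ev2 at h1 h2
    simp only [map_add, map_mul, h1, h2]
    ring
  have hkerΦ : LinearMap.ker Φ = LinearMap.range Ψ := by
    apply le_antisymm
    · rintro ⟨a, b⟩ hab
      rw [LinearMap.mem_ker] at hab
      have hab' : p * (a : MvPolynomial (Fin 2) ℂ) + q * (b : MvPolynomial (Fin 2) ℂ) = 0 := by
        have := congrArg (fun x : V k => (x : MvPolynomial (Fin 2) ℂ)) hab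
        simpa [hΦval] using this
      by_cases ha : (a : MvPolynomial (Fin 2) ℂ) = 0
      · have hb : (b : MvPolynomial (Fin 2) ℂ) = 0 := by
          have h0 : q * (b : MvPolynomial (Fin 2) ℂ) = 0 := by
            rw [ha, mul_zero, zero_add] at hab'; exact hab'
          rcases mul_eq_zero.mp h0 with h | h
          · exact absurd h hq.ne_zero
          · exact h
        refine ⟨0, ?_⟩
        rw [map_zero]
        exact (Prod.ext (Subtype.ext ha) (Subtype.ext hb)).symm
      · have hqa : q ∣ p * (a : MvPolynomial (Fin 2) ℂ) :=
          ⟨-(b : MvPolynomial (Fin 2) ℂ), by linear_combination hab'⟩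
        have hqa' : q ∣ (a : MvPolynomial (Fin 2) ℂ) := by
          rcases hq.2.2 _ _ hqa with h | h
          · exact absurd h hndvd
          · exact h
        obtain ⟨c, hc⟩ := hqa'
        have hc0 : c ≠ 0 := by
          rintro rfl
          rw [mul_zero] at hc
          exact ha hc
        have hdegc : c.totalDegree ≤ r := by
          have h1 : (a : MvPolynomial (Fin 2) ℂ).totalDegree = n + c.totalDegree := by
            rw [hc, tdeg_mul_eq hq.ne_zero hc0]
          have h2 := degV _ a
          omega
        have hb : (b : MvPolynomial (Fin 2) ℂ) = (-p) * c := by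
          have h3 : q * ((b : MvPolynomial (Fin 2) ℂ) - (-p) * c) = 0 := by
            rw [hc] at hab'
            linear_combination hab'
          rcases mul_eq_zero.mp h3 with h | h
          · exact absurd h hq.ne_zero
          · linear_combination h
        refine ⟨⟨c, memV _ _ hdegc⟩, ?_⟩
        refine Prod.ext (Subtype.ext ?_) (Subtype.ext ?_)
        · rw [(hΨval _).1]; exact hc.symm
        · rw [(hΨval _).2]; exact hb.symm
    · rintro x ⟨c, rfl⟩
      rw [LinearMap.mem_ker]
      apply Subtype.ext
      rw [hΦval]
      show p * (q * c.1) + q * ((-p) * c.1) = ((0 : V k) : MvPolynomial (Fin 2) ℂ)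
      simp only [ZeroMemClass.coe_zero]
      ring
  -- dimension count
  letI : FiniteDimensional ℂ (V k) :=
    (inferInstance : FiniteDimensional ℂ (restrictTotalDegree (Fin 2) ℂ k))
  letI : FiniteDimensional ℂ (V (n+r)) :=
    (inferInstance : FiniteDimensional ℂ (restrictTotalDegree (Fin 2) ℂ (n+r)))
  letI : FiniteDimensional ℂ (V (m+r)) :=
    (inferInstance : FiniteDimensional ℂ (restrictTotalDegree (Fin 2) ℂ (m+r)))
  letI : FiniteDimensional ℂ (V r) :=
    (inferInstance : FiniteDimensional ℂ (restrictTotalDegree (Fin 2) ℂ r))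
  have hrnE := LinearMap.finrank_range_add_finrank_ker E
  have hrangeE : Module.finrank ℂ (LinearMap.range E) = r := by
    rw [LinearMap.range_eq_top.mpr hEsurj, finrank_top]
    rw [Module.finrank_pi]
    rw [Fintype.card_coe]
  have hrnΦ := LinearMap.finrank_range_add_finrank_ker Φ
  have hprod : Module.finrank ℂ ((V (n+r)) × (V (m+r))) = Module.finrank ℂ (V (n+r)) + Module.finrank ℂ (V (m+r)) :=
    Module.finrank_prod
  have hkerΦ' : Module.finrank ℂ (LinearMap.ker Φ) = Module.finrank ℂ (V r) := by
    rw [hkerΦ, LinearMap.finrank_range_of_inj hΨinj]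
  have hle : Module.finrank ℂ (LinearMap.range Φ) ≤ Module.finrank ℂ (LinearMap.ker E) :=
    Submodule.finrank_mono hrange_le
  have e1 : Module.finrank ℂ (V (n+r)) * 2 = (n+r+1) * (n+r+2) := finrank_Vk_mul_two (n+r)
  have e2 : Module.finrank ℂ (V (m+r)) * 2 = (m+r+1) * (m+r+2) := finrank_Vk_mul_two (m+r)
  have e3 : Module.finrank ℂ (V r) * 2 = (r+1) * (r+2) := finrank_Vk_mul_two r
  have e4 : Module.finrank ℂ (V k) * 2 = (k+1) * (k+2) := finrank_Vk_mul_two k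
  rw [hrangeE] at hrnE
  rw [hprod, hkerΦ'] at hrnΦ
  have e4' : Module.finrank ℂ (V k) * 2 = (m+n+r+1) * (m+n+r+2) := finrank_Vk_mul_two (m+n+r)
  have key : (r + Module.finrank ℂ (V (n+r)) + Module.finrank ℂ (V (m+r))) * 2
      ≤ (Module.finrank ℂ (V k) + Module.finrank ℂ (V r)) * 2 := by omega
  have final : r * 2 + (n+r+1)*(n+r+2) + (m+r+1)*(m+r+2)
      ≤ (m+n+r+1)*(m+n+r+2) + (r+1)*(r+2) := by linarith [e1, e2, e3, e4', key]
  show r ≤ m * n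
  nlinarith [final]

-- ### small helpers

theorem fin2_sum' (w : Fin 2 →₀ ℕ) : (w.sum fun _ e => e) = w 0 + w 1 := by
  rw [Finsupp.sum_fintype _ _ (fun _ => rfl), Fin.sum_univ_two]

theorem fin4_sum (w : Fin 4 →₀ ℕ) : (w.sum fun _ e => e) = w 0 + w 1 + w 2 + w 3 := by
  rw [Finsupp.sum_fintype _ _ (fun _ => rfl), Fin.sum_univ_four]

theorem vec2_eq (v : Fin 2 → ℂ) : ![v 0, v 1] = v := by
  funext i; fin_cases i <;> rfl

-- ### Nullstellensatz divisibility

theorem dvd_of_vanish {g c : MvPolynomial (Fin 2) ℂ} (hg : Irreducible g)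
    (h : ∀ w : ℂ × ℂ, ev2 g w = 0 → ev2 c w = 0) : g ∣ c := by
  have hprime : Prime g := (UniqueFactorizationMonoid.irreducible_iff_prime).mp hg
  have hP : (Ideal.span {g} : Ideal (MvPolynomial (Fin 2) ℂ)).IsPrime :=
    (Ideal.span_singleton_prime hprime.ne_zero).mpr hprime
  have h1 : c ∈ vanishingIdeal ℂ (zeroLocus ℂ (Ideal.span {g})) := by
    rw [mem_vanishingIdeal_iff]
    intro x hx
    have hgx : eval x g = 0 := hx g (Ideal.subset_span rfl)
    have := h (x 0, x 1) (by unfold ev2; rw [show ![(x 0, x 1).1, (x 0, x 1).2] = x from vec2_eq x]; exact hgx)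
    unfold ev2 at this
    rwa [show ![(x 0, x 1).1, (x 0, x 1).2] = x from vec2_eq x] at this
  rw [vanishingIdeal_zeroLocus_eq_radical, hP.radical] at h1
  exact (Ideal.mem_span_singleton).mp h1

-- ### structure of F as polynomial in (s,t) with coefficients in (x,y)

def dst (d : Fin 4 →₀ ℕ) : Fin 2 →₀ ℕ := Finsupp.equivFunOnFinite.symm ![d 2, d 3]
def dxy (d : Fin 4 →₀ ℕ) : Fin 2 →₀ ℕ := Finsupp.equivFunOnFinite.symm ![d 0, d 1]

@[simp] theorem dst_apply0 (d : Fin 4 →₀ ℕ) : dst d 0 = d 2 := rfl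
@[simp] theorem dst_apply1 (d : Fin 4 →₀ ℕ) : dst d 1 = d 3 := rfl
@[simp] theorem dxy_apply0 (d : Fin 4 →₀ ℕ) : dxy d 0 = d 0 := rfl
@[simp] theorem dxy_apply1 (d : Fin 4 →₀ ℕ) : dxy d 1 = d 1 := rfl

def Gpoly (F : MvPolynomial (Fin 4) ℂ) (x y : ℂ) : MvPolynomial (Fin 2) ℂ :=
  ∑ d ∈ F.support, monomial (dst d) (coeff d F * x ^ (d 0) * y ^ (d 1))

def Cpoly (F : MvPolynomial (Fin 4) ℂ) (e : Fin 2 →₀ ℕ) : MvPolynomial (Fin 2) ℂ :=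
  ∑ d ∈ F.support.filter (fun d => dst d = e), monomial (dxy d) (coeff d F)

theorem prod2 (w : Fin 2 →₀ ℕ) (v : Fin 2 → ℂ) :
    (w.prod fun i e => v i ^ e) = v 0 ^ w 0 * v 1 ^ w 1 := by
  rw [Finsupp.prod_fintype _ _ (fun _ => pow_zero _), Fin.prod_univ_two]

theorem prod4 (w : Fin 4 →₀ ℕ) (v : Fin 4 → ℂ) :
    (w.prod fun i e => v i ^ e) = v 0 ^ w 0 * v 1 ^ w 1 * v 2 ^ w 2 * v 3 ^ w 3 := by
  rw [Finsupp.prod_fintype _ _ (fun _ => pow_zero _), Fin.prod_univ_four]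

theorem Gpoly_eval (F : MvPolynomial (Fin 4) ℂ) (x y s t : ℂ) :
    ev2 (Gpoly F x y) (s, t) = ev4 F x y s t := by
  unfold ev2 ev4 Gpoly
  rw [map_sum]
  conv_rhs => rw [F.as_sum]
  rw [map_sum]
  refine Finset.sum_congr rfl fun d _ => ?_
  rw [eval_monomial, eval_monomial, prod2, prod4]
  show coeff d F * x ^ d 0 * y ^ d 1 * (s ^ d 2 * t ^ d 3)
    = coeff d F * (x ^ d 0 * y ^ d 1 * s ^ d 2 * t ^ d 3)
  ring

theorem Gpoly_tdeg (F : MvPolynomial (Fin 4) ℂ) (x y : ℂ) :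
    (Gpoly F x y).totalDegree ≤ F.totalDegree := by
  unfold Gpoly
  refine le_trans (totalDegree_finset_sum _ _) (Finset.sup_le fun d hd => ?_)
  refine le_trans (totalDegree_monomial_le _ _) ?_
  have h1 : ((dst d).sum fun _ e => e) = d 2 + d 3 := by rw [fin2_sum', dst_apply0, dst_apply1]
  have h2 := le_totalDegree hd
  rw [fin4_sum] at h2
  have h3 : ((dst d).sum fun _ => id) = ((dst d).sum fun _ e => e) := rfl
  rw [h3, h1]
  omega

theorem Cpoly_eval (F : MvPolynomial (Fin 4) ℂ) (e : Fin 2 →₀ ℕ) (x y : ℂ) :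
    coeff e (Gpoly F x y) = ev2 (Cpoly F e) (x, y) := by
  unfold Gpoly Cpoly ev2
  rw [map_sum, MvPolynomial.coeff_sum]
  rw [Finset.sum_congr rfl (fun d _ => coeff_monomial e (dst d) _)]
  rw [← Finset.sum_filter]
  refine Finset.sum_congr rfl fun d _ => ?_
  rw [eval_monomial, prod2]
  show coeff d F * x ^ d 0 * y ^ d 1 = coeff d F * (x ^ d 0 * y ^ d 1)
  ring

-- ### reconstruction of F from the Cpoly's

def f02 : Fin 2 → Fin 4 := ![0, 1]

theorem f02_inj : Function.Injective f02 := by decide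

def emb23 (e : Fin 2 →₀ ℕ) : Fin 4 →₀ ℕ := Finsupp.equivFunOnFinite.symm ![0, 0, e 0, e 1]

theorem mapDomain_f02_2 (w : Fin 2 →₀ ℕ) : Finsupp.mapDomain f02 w 2 = 0 :=
  Finsupp.mapDomain_notin_range _ _ (by rintro ⟨j, hj⟩; fin_cases j <;> exact absurd hj (by decide))

theorem mapDomain_f02_3 (w : Fin 2 →₀ ℕ) : Finsupp.mapDomain f02 w 3 = 0 :=
  Finsupp.mapDomain_notin_range _ _ (by rintro ⟨j, hj⟩; fin_cases j <;> exact absurd hj (by decide))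

theorem mapDomain_f02_0 (w : Fin 2 →₀ ℕ) : Finsupp.mapDomain f02 w 0 = w 0 :=
  Finsupp.mapDomain_apply f02_inj w 0

theorem mapDomain_f02_1 (w : Fin 2 →₀ ℕ) : Finsupp.mapDomain f02 w 1 = w 1 :=
  Finsupp.mapDomain_apply f02_inj w 1

theorem key_decomp (d : Fin 4 →₀ ℕ) :
    Finsupp.mapDomain f02 (dxy d) + emb23 (dst d) = d := by
  ext i
  rw [Finsupp.add_apply]
  fin_cases i
  · show Finsupp.mapDomain f02 (dxy d) 0 + emb23 (dst d) 0 = d 0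
    rw [mapDomain_f02_0]; show d 0 + 0 = d 0; omega
  · show Finsupp.mapDomain f02 (dxy d) 1 + emb23 (dst d) 1 = d 1
    rw [mapDomain_f02_1]; show d 1 + 0 = d 1; omega
  · show Finsupp.mapDomain f02 (dxy d) 2 + emb23 (dst d) 2 = d 2
    rw [mapDomain_f02_2]; show 0 + d 2 = d 2; omega
  · show Finsupp.mapDomain f02 (dxy d) 3 + emb23 (dst d) 3 = d 3
    rw [mapDomain_f02_3]; show 0 + d 3 = d 3; omega

theorem recon (F : MvPolynomial (Fin 4) ℂ) :
    F = ∑ e ∈ F.support.image dst, (rename f02 (Cpoly F e)) * monomial (emb23 e) 1 := by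
  conv_lhs => rw [F.as_sum]
  rw [← Finset.sum_fiberwise_of_maps_to (fun d hd => Finset.mem_image_of_mem dst hd)
    (fun d => monomial d (coeff d F))]
  refine Finset.sum_congr rfl fun e he => ?_
  unfold Cpoly
  rw [map_sum, Finset.sum_mul]
  refine Finset.sum_congr rfl fun d hd => ?_
  rw [rename_monomial, monomial_mul, mul_one]
  have hdst : dst d = e := (Finset.mem_filter.mp hd).2
  rw [← hdst, key_decomp d]

theorem lift_dvd (F : MvPolynomial (Fin 4) ℂ) (g : MvPolynomial (Fin 2) ℂ)
    (h : ∀ e, g ∣ Cpoly F e) : rename f02 g ∣ F := by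
  rw [recon F]
  refine Finset.dvd_sum fun e _ => ?_
  obtain ⟨c, hc⟩ := h e
  exact ⟨rename f02 c * monomial (emb23 e) 1, by rw [hc, map_mul, mul_assoc]⟩

-- ### pderiv vanishing lemmas

theorem pderiv_zero_of_support {p : MvPolynomial (Fin 4) ℂ} {i : Fin 4}
    (h : ∀ m ∈ p.support, m i = 0) : pderiv i p = 0 := by
  conv_lhs => rw [p.as_sum]
  rw [map_sum]
  refine Finset.sum_eq_zero fun m hm => ?_
  rw [pderiv_monomial, h m hm, Nat.cast_zero, mul_zero, monomial_zero]

theorem pderiv2_rename_f02 (g : MvPolynomial (Fin 2) ℂ) : pderiv 2 (rename f02 g) = 0 := by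
  refine pderiv_zero_of_support fun m hm => ?_
  have h := coeff_rename_ne_zero f02 g m (mem_support_iff.mp hm)
  obtain ⟨u, hu, -⟩ := h
  rw [← hu]
  exact mapDomain_f02_2 u

theorem unit_tdeg_zero {σ : Type*} [DecidableEq σ] {u : MvPolynomial σ ℂ} (h : IsUnit u) :
    u.totalDegree = 0 := by
  obtain ⟨v, hv⟩ := IsUnit.exists_right_inv h
  have hu0 : u ≠ 0 := by rintro rfl; rw [zero_mul] at hv; exact one_ne_zero hv.symm
  have hv0 : v ≠ 0 := by rintro rfl; rw [mul_zero] at hv; exact one_ne_zero hv.symm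
  have := tdeg_mul_eq hu0 hv0
  rw [hv, totalDegree_one] at this
  omega

theorem pderiv_zero_of_unit {u : MvPolynomial (Fin 4) ℂ} (h : IsUnit u) (i : Fin 4) :
    pderiv i u = 0 := by
  refine pderiv_zero_of_support fun m hm => ?_
  have := (totalDegree_eq_zero_iff (Fin 4) u).mp (unit_tdeg_zero h)
  exact this m hm i

theorem no_lift_dvd {F : MvPolynomial (Fin 4) ℂ} (hirr : Irreducible F)
    (hp2 : pderiv 2 F ≠ 0) {g : MvPolynomial (Fin 2) ℂ} (hg : Irreducible g)
    (hdvd : rename f02 g ∣ F) : False := by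
  obtain ⟨u, hu⟩ := hdvd
  rcases hirr.isUnit_or_isUnit hu with h | h
  · have h2 : IsUnit (rename (fun i : Fin 4 =>
        if i = 0 then (0 : Fin 2) else if i = 1 then 1 else 0) (rename f02 g)) :=
      h.map _
    rw [rename_rename] at h2
    have hcomp : ((fun i : Fin 4 => if i = 0 then (0 : Fin 2) else if i = 1 then 1 else 0) ∘ f02)
        = id := by funext j; fin_cases j <;> rfl
    rw [hcomp, rename_id] at h2
    exact hg.not_isUnit h2
  · have h1 : pderiv 2 u = 0 := pderiv_zero_of_unit h 2
    have h2 : pderiv 2 (rename f02 g) = 0 := pderiv2_rename_f02 g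
    have : pderiv 2 F = 0 := by
      rw [hu, pderiv_mul, h1, h2]
      simp
    exact hp2 this

-- ### multiset products and degrees

theorem prod_ne_zero (s : Multiset (MvPolynomial (Fin 2) ℂ)) (h : ∀ q ∈ s, q ≠ 0) :
    s.prod ≠ 0 := by
  induction s using Multiset.induction_on with
  | empty => simp
  | cons a t ih =>
    rw [Multiset.prod_cons]
    exact mul_ne_zero (h a (Multiset.mem_cons_self a t))
      (ih fun q hq => h q (Multiset.mem_cons_of_mem hq))

theorem tdeg_multiset_prod (s : Multiset (MvPolynomial (Fin 2) ℂ)) (h : ∀ q ∈ s, q ≠ 0) :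
    s.prod.totalDegree = (s.map MvPolynomial.totalDegree).sum := by
  induction s using Multiset.induction_on with
  | empty => simp [totalDegree_one]
  | cons a t ih =>
    rw [Multiset.prod_cons, Multiset.map_cons, Multiset.sum_cons]
    rw [tdeg_mul_eq (h a (Multiset.mem_cons_self a t))
      (prod_ne_zero t fun q hq => h q (Multiset.mem_cons_of_mem hq))]
    rw [ih fun q hq => h q (Multiset.mem_cons_of_mem hq)]

theorem multiset_sum_le {s t : Multiset ℕ} (h : s ≤ t) : s.sum ≤ t.sum := by
  obtain ⟨u, rfl⟩ := Multiset.le_iff_exists_add.mp h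
  rw [Multiset.sum_add]
  omega

-- ### pigeonhole over factors

theorem pigeon {δ : ℕ} {h0 : MvPolynomial (Fin 2) ℂ} (h0ne : h0 ≠ 0)
    (hdeg : h0.totalDegree ≤ δ) (P : Finset (ℂ × ℂ)) (hcard : δ ^ 2 + 1 ≤ P.card)
    (hzero : ∀ z ∈ P, ev2 h0 z = 0) :
    ∃ q : MvPolynomial (Fin 2) ℂ, Irreducible q ∧ q.totalDegree ≤ δ ∧
      q.totalDegree * δ + 1 ≤ (P.filter (fun z => ev2 q z = 0)).card := by
  classical
  set fs := UniqueFactorizationMonoid.factors h0 with hfs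
  obtain ⟨u, hu⟩ := UniqueFactorizationMonoid.factors_prod h0ne
  have hirr_mem : ∀ q ∈ fs, Irreducible q := fun q hq =>
    UniqueFactorizationMonoid.irreducible_of_factor q hq
  have hne_mem : ∀ q ∈ fs, q ≠ 0 := fun q hq => (hirr_mem q hq).ne_zero
  have hprodne : fs.prod ≠ 0 := prod_ne_zero fs hne_mem
  have hdegsum : (fs.map MvPolynomial.totalDegree).sum ≤ δ := by
    have h1 : h0.totalDegree = fs.prod.totalDegree + (u : MvPolynomial (Fin 2) ℂ).totalDegree := by
      rw [← hu, tdeg_mul_eq hprodne (Units.ne_zero u)]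
    rw [unit_tdeg_zero u.isUnit] at h1
    rw [← tdeg_multiset_prod fs hne_mem]
    omega
  have hcover : ∀ z ∈ P, ∃ q ∈ fs, ev2 q z = 0 := by
    intro z hz
    have h1 := hzero z hz
    unfold ev2 at h1
    rw [← hu, map_mul] at h1
    have hune : eval ![z.1, z.2] (u : MvPolynomial (Fin 2) ℂ) ≠ 0 :=
      (u.isUnit.map (eval ![z.1, z.2])).ne_zero
    have hprod0 : eval ![z.1, z.2] fs.prod = 0 := by
      rcases mul_eq_zero.mp h1 with h | h
      · exact h
      · exact absurd h hune
    rw [map_multiset_prod] at hprod0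
    have h2 := Multiset.prod_eq_zero_iff.mp hprod0
    obtain ⟨q, hq, hq0⟩ := Multiset.mem_map.mp h2
    exact ⟨q, hq, hq0⟩
  by_contra hcon
  push_neg at hcon
  have hsub : P ⊆ fs.toFinset.biUnion (fun q => P.filter (fun z => ev2 q z = 0)) := by
    intro z hz
    obtain ⟨q, hq, h⟩ := hcover z hz
    exact Finset.mem_biUnion.mpr ⟨q, Multiset.mem_toFinset.mpr hq,
      Finset.mem_filter.mpr ⟨hz, h⟩⟩
  have h1 : P.card ≤ ∑ q ∈ fs.toFinset, (P.filter (fun z => ev2 q z = 0)).card :=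
    le_trans (Finset.card_le_card hsub) Finset.card_biUnion_le
  have h2 : ∀ q ∈ fs.toFinset, (P.filter (fun z => ev2 q z = 0)).card ≤ q.totalDegree * δ := by
    intro q hq
    have hqfs := Multiset.mem_toFinset.mp hq
    have hiq := hirr_mem q hqfs
    have hdq : q.totalDegree ≤ δ := by
      refine le_trans ?_ hdegsum
      exact Multiset.single_le_sum (fun x _ => Nat.zero_le x) _
        (Multiset.mem_map_of_mem _ hqfs)
    have := hcon q hiq hdq
    omega
  have h3 : ∑ q ∈ fs.toFinset, (P.filter (fun z => ev2 q z = 0)).card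
      ≤ ∑ q ∈ fs.toFinset, q.totalDegree * δ := Finset.sum_le_sum h2
  have h4 : ∑ q ∈ fs.toFinset, q.totalDegree * δ ≤ (fs.map MvPolynomial.totalDegree).sum * δ := by
    have e1 : ∑ q ∈ fs.toFinset, q.totalDegree * δ
        = (fs.dedup.map (fun q => q.totalDegree * δ)).sum := by
      rw [Finset.sum]
      rfl
    have e2 : (fs.dedup.map (fun q => q.totalDegree * δ)).sum
        ≤ (fs.map (fun q => q.totalDegree * δ)).sum :=
      multiset_sum_le (Multiset.map_le_map (Multiset.dedup_le fs))
    have e3 : (fs.map (fun q => q.totalDegree * δ)).sum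
        = (fs.map MvPolynomial.totalDegree).sum * δ := by
      rw [← Multiset.sum_map_mul_right]
    omega
  have hsq : δ ^ 2 = δ * δ := sq δ
  have : (fs.map MvPolynomial.totalDegree).sum * δ ≤ δ * δ :=
    Nat.mul_le_mul_right δ hdegsum
  omega

-- ### the core lemma

theorem core (F : MvPolynomial (Fin 4) ℂ) (δ : ℕ) (hirr : Irreducible F)
    (hdeg : F.totalDegree = δ) (hp2 : pderiv 2 F ≠ 0)
    (g : MvPolynomial (Fin 2) ℂ) (hg : Irreducible g)
    (P : Finset (ℂ × ℂ)) (hcard : δ ^ 2 + 1 ≤ P.card)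
    (hsub : ∀ z ∈ P, ∀ w : ℂ × ℂ, ev2 g w = 0 → ev4 F w.1 w.2 z.1 z.2 = 0) :
    ∃ q : MvPolynomial (Fin 2) ℂ, Irreducible q ∧ q.totalDegree ≤ δ ∧
      ∀ z : ℂ × ℂ, ev2 q z = 0 → ∀ w : ℂ × ℂ, ev2 g w = 0 →
        ev4 F w.1 w.2 z.1 z.2 = 0 := by
  have hGex : ∃ w : ℂ × ℂ, ev2 g w = 0 ∧ Gpoly F w.1 w.2 ≠ 0 := by
    by_contra hno
    push_neg at hno
    have hdvd : ∀ e, g ∣ Cpoly F e := by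
      intro e
      refine dvd_of_vanish hg fun w hw => ?_
      have hG := hno w hw
      have h1 := Cpoly_eval F e w.1 w.2
      rw [hG, coeff_zero] at h1
      exact h1.symm
    exact no_lift_dvd hirr hp2 hg (lift_dvd F g hdvd)
  obtain ⟨w0, hw0, hG0⟩ := hGex
  have hGdeg : (Gpoly F w0.1 w0.2).totalDegree ≤ δ := hdeg ▸ Gpoly_tdeg F w0.1 w0.2
  have hzero : ∀ z ∈ P, ev2 (Gpoly F w0.1 w0.2) z = 0 := by
    intro z hz
    calc ev2 (Gpoly F w0.1 w0.2) z = ev4 F w0.1 w0.2 z.1 z.2 :=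
          Gpoly_eval F w0.1 w0.2 z.1 z.2
      _ = 0 := hsub z hz w0 hw0
  obtain ⟨q, hqirr, hqdeg, hqcard⟩ := pigeon hG0 hGdeg P hcard hzero
  have hqprime : Prime q := UniqueFactorizationMonoid.irreducible_iff_prime.mp hqirr
  have hqdvd : ∀ w : ℂ × ℂ, ev2 g w = 0 → q ∣ Gpoly F w.1 w.2 := by
    intro w hw
    by_cases hGw : Gpoly F w.1 w.2 = 0
    · rw [hGw]; exact dvd_zero q
    by_contra hndvd
    have hbez := bezout_card hGw hqprime hndvd (P.filter (fun z => ev2 q z = 0)) ?_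
    · have h5 : q.totalDegree * δ + 1 ≤ (Gpoly F w.1 w.2).totalDegree * q.totalDegree :=
        le_trans hqcard hbez
      have h6 : (Gpoly F w.1 w.2).totalDegree * q.totalDegree ≤ δ * q.totalDegree :=
        Nat.mul_le_mul_right q.totalDegree (hdeg ▸ Gpoly_tdeg F w.1 w.2)
      have h7 : δ * q.totalDegree = q.totalDegree * δ := mul_comm _ _
      omega
    · intro z hz
      obtain ⟨hzP, hzq⟩ := Finset.mem_filter.mp hz
      refine ⟨?_, hzq⟩
      calc ev2 (Gpoly F w.1 w.2) z = ev4 F w.1 w.2 z.1 z.2 := Gpoly_eval F w.1 w.2 z.1 z.2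
        _ = 0 := hsub z hzP w hw
  refine ⟨q, hqirr, hqdeg, ?_⟩
  intro z hz w hw
  obtain ⟨c, hc⟩ := hqdvd w hw
  have h8 : ev2 (Gpoly F w.1 w.2) z = 0 := by
    unfold ev2 at hz ⊢
    rw [hc, map_mul, hz, zero_mul]
  rw [← Gpoly_eval F w.1 w.2 z.1 z.2]
  exact h8


-- ### the coordinate swap

def σswap : Fin 4 ≃ Fin 4 :=
  ⟨![2, 3, 0, 1], ![2, 3, 0, 1], by decide, by decide⟩

theorem swap_eval (F : MvPolynomial (Fin 4) ℂ) (x y s t : ℂ) :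
    ev4 (rename σswap F) x y s t = ev4 F s t x y := by
  unfold ev4
  rw [eval_rename]
  have h : (![x, y, s, t] ∘ (σswap : Fin 4 → Fin 4)) = ![s, t, x, y] := by
    funext i; fin_cases i <;> rfl
  rw [h]

theorem swap_irr {F : MvPolynomial (Fin 4) ℂ} (h : Irreducible F) :
    Irreducible (rename σswap F) := by
  have : rename (σswap : Fin 4 → Fin 4) F = (MvPolynomial.renameEquiv ℂ σswap) F := rfl
  rw [this]
  exact (MulEquiv.irreducible_iff (MvPolynomial.renameEquiv ℂ σswap)).mpr h

theorem swap_tdeg (F : MvPolynomial (Fin 4) ℂ) :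
    (rename σswap F).totalDegree = F.totalDegree := by
  refine le_antisymm (totalDegree_rename_le _ _) ?_
  have h1 : F = rename (σswap.symm : Fin 4 → Fin 4) (rename σswap F) := by
    rw [rename_rename]
    have : ((σswap.symm : Fin 4 → Fin 4) ∘ (σswap : Fin 4 → Fin 4)) = id := by
      funext i; exact σswap.symm_apply_apply i
    rw [this, rename_id, AlgHom.id_apply]
  conv_lhs => rw [h1]
  exact totalDegree_rename_le _ _

theorem swap_pderiv2 {F : MvPolynomial (Fin 4) ℂ} (h : pderiv 0 F ≠ 0) :
    pderiv 2 (rename σswap F) ≠ 0 := by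
  have h2 : (2 : Fin 4) = σswap 0 := rfl
  rw [h2, pderiv_rename σswap.injective]
  intro hc
  apply h
  have hinj := rename_injective (R := ℂ) (σswap : Fin 4 → Fin 4) σswap.injective
  apply hinj
  rw [hc, map_zero]

/-- **Lemma 2.4.** (a) Every popular curve `γ` has an associated irreducible curve `γ*` of
degree at most `δ` with `γ ⊆ γ_{s,t}` for all `(s,t) ∈ γ*`; (b) symmetrically for popular
dual curves. -/
theorem popular_curve_associated (F : MvPolynomial (Fin 4) ℂ) (δ : ℕ)
    (hirr : Irreducible F) (hdeg : F.totalDegree = δ)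
    (hder : ∀ i : Fin 4, pderiv i F ≠ 0) :
    (∀ γ : Set (ℂ × ℂ), IsPopular F δ γ →
      ∃ γs : Set (ℂ × ℂ), IsIrredCurveDegLE γs δ ∧
        ∀ q ∈ γs, γ ⊆ curveOf F (Prod.fst q) (Prod.snd q)) ∧
    (∀ γs : Set (ℂ × ℂ), IsPopularDual F δ γs →
      ∃ γ : Set (ℂ × ℂ), IsIrredCurveDegLE γ δ ∧
        ∀ p ∈ γ, γs ⊆ dualCurveOf F (Prod.fst p) (Prod.snd p)) := by
  constructor
  · rintro γ ⟨⟨g, hg, rfl⟩, P, hcard, hP⟩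
    obtain ⟨q, hqirr, hqdeg, hq⟩ := core F δ hirr hdeg (hder 2) g hg P hcard
      (fun z hz w hw => (hP z hz).2 hw)
    refine ⟨{p : ℂ × ℂ | ev2 q p = 0}, ⟨q, hqirr, hqdeg, rfl⟩, ?_⟩
    intro z hz w hw
    exact hq z hz w hw
  · rintro γs ⟨⟨g, hg, rfl⟩, P, hcard, hP⟩
    have hirr' : Irreducible (rename σswap F) := swap_irr hirr
    have hdeg' : (rename σswap F).totalDegree = δ := by rw [swap_tdeg, hdeg]
    have hp2' : pderiv 2 (rename σswap F) ≠ 0 := swap_pderiv2 (hder 0)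
    have hsub : ∀ z ∈ P, ∀ w : ℂ × ℂ, ev2 g w = 0 →
        ev4 (rename σswap F) w.1 w.2 z.1 z.2 = 0 := by
      intro z hz w hw
      rw [swap_eval]
      exact (hP z hz).2 hw
    obtain ⟨q, hqirr, hqdeg, hq⟩ := core (rename σswap F) δ hirr' hdeg' hp2' g hg P hcard hsub
    refine ⟨{p : ℂ × ℂ | ev2 q p = 0}, ⟨q, hqirr, hqdeg, rfl⟩, ?_⟩
    intro z hz w hw
    have := hq z hz w hw
    rw [swap_eval] at this
    exact this
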